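/- arXiv:2302.04050 — 7 statements merged into one kernel-verified Lean document; each statement's English description precedes it below -/
import Mathlib

section
/- Let D be the complete graph K_{2d+1} with arcs oriented along an Eulerian circuit (so every vertex has outdegree and indegree exactly d). Then for every bipartition V(D) = V1 ∪ V2, the number of arcs directed from V1 to V2 is at most d(d+1)/2. -/
open Finset

def arcs {V : Type*} [DecidableEq V] (A : V → V → Prop) [DecidableRel A]
    (X Y : Finset V) : ℕ :=
  ((X ×ˢ Y).filter (fun p => A p.1 p.2)).card

def outdeg {V : Type*} [Fintype V] (A : V → V → Prop) [DecidableRel A] (v : V) : ℕ :=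
  (Finset.univ.filter (fun w => A v w)).card

/-! Writing `k = |V1|`, the `k d` arcs leaving vertices of `V1` either stay inside `V1` or cross
to `V2`, and at least `k(k-1)/2` of them stay inside because any two vertices are joined by an arc.
Hence `e(V1,V2) ≤ k d - k(k-1)/2`, and `d(d+1)/2` minus this bound is `(d-k)(d-k+1)/2 ≥ 0`. -/

section Arcs

variable {V : Type*} [DecidableEq V] (A : V → V → Prop) [DecidableRel A]

lemma arcs_eq_sum_card_filter (X Y : Finset V) :
    arcs A X Y = ∑ x ∈ X, (Y.filter (fun y => A x y)).card := by
  rw [arcs, card_filter, sum_product]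
  exact sum_congr rfl fun x _ => (card_filter _ _).symm

lemma arcs_add_arcs_compl [Fintype V] (X Y : Finset V) :
    arcs A X Y + arcs A X Yᶜ = ∑ x ∈ X, outdeg A x := by
  rw [arcs_eq_sum_card_filter, arcs_eq_sum_card_filter, ← sum_add_distrib]
  refine sum_congr rfl fun x _ => ?_
  rw [← card_union_of_disjoint (disjoint_filter_filter disjoint_compl_right),
    ← filter_union, union_compl, outdeg]

lemma card_offDiag_le_two_mul_arcs (htotal : ∀ u v : V, u ≠ v → A u v ∨ A v u) (X : Finset V) :
    X.offDiag.card ≤ 2 * arcs A X X := by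
  have hforward : (X.offDiag.filter (fun p => A p.1 p.2)).card ≤ arcs A X X :=
    card_le_card (filter_subset_filter _ fun p hp =>
      mem_product.2 ⟨(mem_offDiag.1 hp).1, (mem_offDiag.1 hp).2.1⟩)
  have hbackward : (X.offDiag.filter (fun p => ¬ A p.1 p.2)).card ≤
      (X.offDiag.filter (fun p => A p.1 p.2)).card := by
    refine card_le_card_of_injOn Prod.swap (fun p hp => ?_) Prod.swap_injective.injOn
    simp only [coe_filter, mem_offDiag, Set.mem_ofPred_eq] at hp ⊢
    obtain ⟨⟨h1, h2, hne⟩, hA⟩ := hp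
    exact ⟨⟨h2, h1, Ne.symm hne⟩, (htotal p.1 p.2 hne).resolve_left hA⟩
  have := card_filter_add_card_filter_not (s := X.offDiag) (fun p => A p.1 p.2)
  omega

end Arcs

lemma two_mul_mul_add_le (k d : ℕ) : 2 * (k * d) + k ≤ d * (d + 1) + k * k := by
  have hconsec : 0 ≤ ((d : ℤ) - k) * ((d : ℤ) - k + 1) := by
    rcases le_or_gt (k : ℤ) d with h | h
    · exact mul_nonneg (by linarith) (by linarith)
    · exact mul_nonneg_of_nonpos_of_nonpos (by linarith) (by linarith)
  zify
  nlinarith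

theorem stmt2_general {V : Type*} [Fintype V] [DecidableEq V] (d : ℕ)
    (A : V → V → Prop) [DecidableRel A]
    (htour : ∀ u v : V, u ≠ v → (A u v ↔ ¬ A v u))
    (hdeg : ∀ v, outdeg A v = d) :
    ∀ V1 : Finset V, arcs A V1 V1ᶜ ≤ d * (d + 1) / 2 := by
  intro V1
  have hsplit : arcs A V1 V1 + arcs A V1 V1ᶜ = V1.card * d := by
    rw [arcs_add_arcs_compl, sum_congr rfl fun v _ => hdeg v, sum_const, smul_eq_mul]
  have hinside : V1.card * V1.card ≤ 2 * arcs A V1 V1 + V1.card := by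
    have := card_offDiag_le_two_mul_arcs A
      (fun u v huv => (em (A v u)).symm.imp_left (htour u v huv).mpr) V1
    rw [offDiag_card] at this
    omega
  have := two_mul_mul_add_le V1.card d
  rw [Nat.le_div_iff_mul_le two_pos]
  linarith

/-- For any orientation of `K_{2d+1}` in which every vertex has outdegree `d`,
every bipartition `V1 ∪ V2` has at most `d(d+1)/2` arcs from `V1` to `V2`. -/
theorem stmt2 {V : Type*} [Fintype V] [DecidableEq V] (d : ℕ)
    (hV : Fintype.card V = 2 * d + 1)
    (A : V → V → Prop) [DecidableRel A]
    (hloop : ∀ v, ¬ A v v)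
    (htour : ∀ u v : V, u ≠ v → (A u v ↔ ¬ A v u))
    (hdeg : ∀ v, outdeg A v = d) :
    ∀ V1 : Finset V, arcs A V1 V1ᶜ ≤ d * (d + 1) / 2 :=
  stmt2_general d A htour hdeg
end

section
/- Let D be a digraph, Y ⊆ V(D), and X = V(D) \ Y, such that every vertex of Y has outdegree at least d in D. If C is a subset of Y inducing a subgraph of D with no pair of antiparallel arcs and |C| = i with 1 ≤ i ≤ 2d−1, then the number of arcs from C to X ∪ (Y \ C) is at least d·i − i(i−1)/2 ≥ d. -/
open Finset

/-- If every vertex of `Y` has outdegree at least `d` and `C ⊆ Y` induces a subdigraph with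
no antiparallel pair, `|C| = i` with `1 ≤ i ≤ 2d−1`, then the number of arcs leaving `C`
is at least `d·i − i(i−1)/2 ≥ d`. -/
theorem stmt4 {V : Type*} [Fintype V] [DecidableEq V]
    (A : V → V → Prop) [DecidableRel A] (hloop : ∀ v, ¬ A v v)
    (d : ℕ) (Y : Finset V) (hdeg : ∀ v ∈ Y, d ≤ outdeg A v)
    (C : Finset V) (hCY : C ⊆ Y)
    (hanti : ∀ u ∈ C, ∀ v ∈ C, ¬ (A u v ∧ A v u))
    (i : ℕ) (hi : C.card = i) (h1 : 1 ≤ i) (h2 : i ≤ 2 * d - 1) :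
    ((d : ℤ) * i - i * (i - 1) / 2 ≤ (arcs A C Cᶜ : ℤ)) ∧
      ((d : ℤ) ≤ (d : ℤ) * i - i * (i - 1) / 2) := by
  have hd : 1 ≤ d := by omega
  -- total outgoing arcs from C
  have hsum : d * i ≤ arcs A C Finset.univ := by
    have he : arcs A C Finset.univ = ∑ v ∈ C, outdeg A v := by
      rw [arcs, Finset.card_filter, Finset.sum_product]
      exact Finset.sum_congr rfl fun v _ => (Finset.card_filter _ _).symm
    rw [he]
    calc d * i = ∑ _v ∈ C, d := by rw [Finset.sum_const, hi]; ring
    _ ≤ _ := Finset.sum_le_sum fun v hv => hdeg v (hCY hv)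
  -- split into internal and leaving arcs
  have hsplit : arcs A C Finset.univ = arcs A C C + arcs A C Cᶜ := by
    simp only [arcs, Finset.card_filter, Finset.sum_product]
    rw [← Finset.sum_add_distrib]
    exact Finset.sum_congr rfl fun v _ => (Finset.sum_add_sum_compl C _).symm
  -- internal arcs bound
  have hint : 2 * arcs A C C ≤ i * (i - 1) := by
    set S := (C ×ˢ C).filter (fun p => A p.1 p.2) with hS
    have hSsub : S ⊆ C.offDiag := by
      intro p hp
      simp only [hS, Finset.mem_filter, Finset.mem_product] at hp
      refine Finset.mem_offDiag.2 ⟨hp.1.1, hp.1.2, ?_⟩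
      intro hne
      exact hloop p.2 (hne ▸ hp.2)
    have hTsub : S.image Prod.swap ⊆ C.offDiag := by
      intro p hp
      obtain ⟨q, hq, rfl⟩ := Finset.mem_image.1 hp
      have := hSsub hq
      simp only [Finset.mem_offDiag] at this ⊢
      exact ⟨this.2.1, this.1, fun h => this.2.2 h.symm⟩
    have hdisj : Disjoint S (S.image Prod.swap) := by
      rw [Finset.disjoint_left]
      intro p hp hp'
      obtain ⟨q, hq, hqp⟩ := Finset.mem_image.1 hp'
      simp only [hS, Finset.mem_filter, Finset.mem_product] at hp hq
      exact hanti p.1 hp.1.1 p.2 hp.1.2 ⟨hp.2, by rw [← hqp]; exact hq.2⟩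
    have hcard : S.card + (S.image Prod.swap).card ≤ C.offDiag.card := by
      rw [← Finset.card_union_of_disjoint hdisj]
      exact Finset.card_le_card (Finset.union_subset hSsub hTsub)
    have himg : (S.image Prod.swap).card = S.card :=
      Finset.card_image_of_injective _ Prod.swap_injective
    have hoff : C.offDiag.card = i * (i - 1) := by
      rw [Finset.offDiag_card, hi, Nat.mul_sub, Nat.mul_one]
    rw [himg, hoff] at hcard
    simpa [arcs, two_mul] using hcard
  -- arithmetic finish
  have hc1 : ((d * i : ℕ) : ℤ) = (d : ℤ) * i := by push_cast; ring
  have hc2 : ((i * (i - 1) : ℕ) : ℤ) = (i : ℤ) * ((i : ℤ) - 1) := by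
    push_cast [Nat.cast_sub h1]
    ring
  have hdvd : (2 : ℤ) ∣ (i : ℤ) * ((i : ℤ) - 1) := by
    have h := Int.even_mul_succ_self ((i : ℤ) - 1)
    have : Even ((i : ℤ) * ((i : ℤ) - 1)) := by
      rwa [sub_add_cancel, mul_comm] at h
    exact this.two_dvd
  have h2' : (i : ℤ) ≤ 2 * d - 1 := by
    have : i ≤ 2 * d - 1 := h2
    omega
  have hkey : (0 : ℤ) ≤ ((i : ℤ) - 1) * (2 * d - i) :=
    mul_nonneg (by omega) (by omega)
  have hineq : 2 * (d : ℤ) ≤ 2 * ((d : ℤ) * i) - (i : ℤ) * ((i : ℤ) - 1) := by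
    nlinarith [hkey]
  have hsum' : (d : ℤ) * i ≤ (arcs A C C : ℤ) + (arcs A C Cᶜ : ℤ) := by
    have := hsum
    rw [hsplit] at this
    exact_mod_cast hc1 ▸ (by exact_mod_cast this : ((d * i : ℕ) : ℤ) ≤ ((arcs A C C + arcs A C Cᶜ : ℕ) : ℤ))
  have hint' : 2 * (arcs A C C : ℤ) ≤ (i : ℤ) * ((i : ℤ) - 1) := by
    rw [← hc2]; exact_mod_cast hint
  constructor
  · have hq := hdvd
    generalize hp : (d : ℤ) * i = p at hsum' ⊢
    generalize hk : (i : ℤ) * ((i : ℤ) - 1) = k at hint' hq ⊢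
    omega
  · generalize hp : (d : ℤ) * i = p at hineq ⊢
    generalize hk : (i : ℤ) * ((i : ℤ) - 1) = k at hineq hdvd ⊢
    omega
end

section
/- Let D be a digraph with minimum semidegree at least d, let X ⊆ V(D) and Y = V(D) \ X, and let τ be the number of essential components of D[Y]. Then (2d+1)τ ≤ |Y| + 2·min{e(X,Y), e(Y,X)}. -/
open Finset

def indeg {V : Type*} [Fintype V] (A : V → V → Prop) [DecidableRel A] (v : V) : ℕ :=
  (Finset.univ.filter (fun w => A w v)).card

/-- The underlying (simple) graph of the subdigraph of `A` induced on `Y`. -/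
def underOn {V : Type*} (A : V → V → Prop) (Y : Finset V) : SimpleGraph V where
  Adj u v := u ≠ v ∧ u ∈ Y ∧ v ∈ Y ∧ (A u v ∨ A v u)
  symm := by
    constructor
    intro u v h
    exact ⟨h.1.symm, h.2.2.1, h.2.1, h.2.2.2.symm⟩
  loopless := by
    constructor
    intro v h
    exact h.1 rfl

def IsMatchingOn {V : Type*} (G : SimpleGraph V) (S : Finset V) (M : Finset (V × V)) : Prop :=
  (∀ p ∈ M, G.Adj p.1 p.2 ∧ p.1 ∈ S ∧ p.2 ∈ S) ∧
  (∀ p ∈ M, ∀ q ∈ M, (p.1 = q.1 ∨ p.1 = q.2 ∨ p.2 = q.1 ∨ p.2 = q.2) → p = q)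

def IsPerfectMatchingOn {V : Type*} (G : SimpleGraph V) (S : Finset V)
    (M : Finset (V × V)) : Prop :=
  IsMatchingOn G S M ∧ ∀ v ∈ S, ∃ p ∈ M, v = p.1 ∨ v = p.2

def IsComponent {V : Type*} (G : SimpleGraph V) (T : Finset V) : Prop :=
  ∃ u ∈ T, ∀ w, w ∈ T ↔ G.Reachable u w

def IsTight {V : Type*} [DecidableEq V] (G : SimpleGraph V) (T : Finset V) : Prop :=
  (∀ v ∈ T, ∃ M, IsPerfectMatchingOn G (T.erase v) M) ∧
  (∀ v ∈ T, ∀ M, IsPerfectMatchingOn G (T.erase v) M →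
    ∀ p ∈ M, (G.Adj v p.1 ↔ G.Adj v p.2))

/-- `T` is an essential component of the subdigraph of `A` induced on `Y`:
a component of `D[Y]` whose underlying graph is tight and which contains
no pair of antiparallel arcs. -/
def IsEssentialComponent {V : Type*} [DecidableEq V] (A : V → V → Prop) (Y : Finset V)
    (T : Finset V) : Prop :=
  T ⊆ Y ∧ IsComponent (underOn A Y) T ∧ IsTight (underOn A Y) T ∧
    ∀ u ∈ T, ∀ v ∈ T, ¬ (A u v ∧ A v u)

/-!
An essential component `T` has odd order `2k + 1`, because `T - v` has a perfect matching, and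
as it has no antiparallel arcs it spans at most `k(2k + 1)` arcs. So some vertex of `T` has at
most `k` out-neighbours in `T`; all its other out-neighbours lie in `X`, as `T` is a component
of `D[Y]`. Hence `2d + 1 ≤ |T| + 2 e(T, X)`, and summing over the disjoint essential components
gives `(2d + 1)τ ≤ |Y| + 2 e(Y, X)`. Reversing all arcs gives the bound with `e(X, Y)`.
-/

section Digraph

variable {V : Type*} [DecidableEq V] (A : V → V → Prop) [DecidableRel A]

lemma arcs_eq_sum (S T : Finset V) : arcs A S T = ∑ u ∈ S, #{w ∈ T | A u w} := by
  simp only [arcs, card_filter, sum_product]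

lemma arcs_flip (S T : Finset V) : arcs (fun u v => A v u) S T = arcs A T S := by
  simp only [arcs, card_filter, sum_product]
  exact sum_comm

lemma sum_card_add_two_mul_arcs_le {𝒮 : Finset (Finset V)}
    (hdisj : (𝒮 : Set (Finset V)).PairwiseDisjoint id) {Y Z : Finset V} (hsub : ∀ T ∈ 𝒮, T ⊆ Y) :
    ∑ T ∈ 𝒮, (#T + 2 * arcs A T Z) ≤ #Y + 2 * arcs A Y Z := by
  have hsplit : ∀ S : Finset V, #S + 2 * arcs A S Z = ∑ u ∈ S, (1 + 2 * #{w ∈ Z | A u w}) := by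
    intro S
    rw [sum_add_distrib, ← mul_sum, ← arcs_eq_sum, card_eq_sum_ones]
  simp only [hsplit]
  exact (sum_biUnion hdisj).ge.trans (sum_le_sum_of_subset (biUnion_subset.mpr hsub))

-- The case `u = v` of the hypothesis excludes loops.
lemma two_mul_arcs_self_le {T : Finset V} (hT : ∀ u ∈ T, ∀ v ∈ T, ¬ (A u v ∧ A v u)) :
    2 * arcs A T T ≤ #T * #T - #T := by
  have hdisj : Disjoint ((T ×ˢ T).filter fun p => A p.1 p.2)
      ((T ×ˢ T).filter fun p => A p.2 p.1) :=
    disjoint_filter.mpr fun p hp h h' =>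
      hT p.1 (mem_product.mp hp).1 p.2 (mem_product.mp hp).2 ⟨h, h'⟩
  have hsub : (T ×ˢ T).filter (fun p => A p.1 p.2 ∨ A p.2 p.1) ⊆ T.offDiag := by
    intro p hp
    obtain ⟨hp, harc⟩ := mem_filter.mp hp
    obtain ⟨h1, h2⟩ := mem_product.mp hp
    refine mem_offDiag.mpr ⟨h1, h2, fun heq => hT p.1 h1 p.1 h1 ?_⟩
    rcases harc with h | h <;> rw [← heq] at h <;> exact ⟨h, h⟩
  calc 2 * arcs A T T = arcs A T T + arcs (fun u v => A v u) T T := by rw [arcs_flip]; ring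
    _ = #((T ×ˢ T).filter fun p => A p.1 p.2 ∨ A p.2 p.1) := by
      rw [filter_or, card_union_of_disjoint hdisj]; rfl
    _ ≤ #T * #T - #T := (card_le_card hsub).trans_eq (offDiag_card T)

end Digraph

section Graph

variable {V : Type*} {G : SimpleGraph V}

lemma IsComponent.mem_of_adj {T : Finset V} (hT : IsComponent G T) {v w : V} (hv : v ∈ T)
    (hvw : G.Adj v w) : w ∈ T := by
  obtain ⟨u, -, hu⟩ := hT
  exact (hu w).mpr (((hu v).mp hv).trans hvw.reachable)

lemma IsComponent.eq_of_mem {T T' : Finset V} (hT : IsComponent G T) (hT' : IsComponent G T')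
    {w : V} (hw : w ∈ T) (hw' : w ∈ T') : T = T' := by
  obtain ⟨u, -, hu⟩ := hT
  obtain ⟨u', -, hu'⟩ := hT'
  have huu' : G.Reachable u u' := ((hu w).mp hw).trans ((hu' w).mp hw').symm
  ext x
  rw [hu x, hu' x]
  exact ⟨huu'.symm.trans, huu'.trans⟩

lemma underOn_flip (A : V → V → Prop) (Y : Finset V) :
    underOn (fun u v => A v u) Y = underOn A Y := by
  ext u v
  simp only [underOn, or_comm]

variable [DecidableEq V]

lemma IsPerfectMatchingOn.card_eq {S : Finset V} {M : Finset (V × V)}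
    (hM : IsPerfectMatchingOn G S M) : #S = 2 * #M := by
  have hS : S = M.biUnion fun p => {p.1, p.2} := by
    ext v
    simp only [mem_biUnion, mem_insert, mem_singleton]
    refine ⟨hM.2 v, ?_⟩
    rintro ⟨p, hp, rfl | rfl⟩
    exacts [(hM.1.1 p hp).2.1, (hM.1.1 p hp).2.2]
  have hdisj : (M : Set (V × V)).PairwiseDisjoint fun p => ({p.1, p.2} : Finset V) := by
    intro p hp q hq hpq
    refine disjoint_left.mpr fun x hxp hxq => hpq (hM.1.2 p hp q hq ?_)
    simp only [mem_insert, mem_singleton] at hxp hxq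
    rcases hxp with rfl | rfl <;> rcases hxq with h | h <;> tauto
  rw [hS, card_biUnion hdisj, sum_congr rfl fun p hp => card_pair (hM.1.1 p hp).1.ne,
    sum_const, smul_eq_mul, mul_comm]

lemma IsTight.exists_card_eq {T : Finset V} (hT : IsTight G T) (hne : T.Nonempty) :
    ∃ k, #T = 2 * k + 1 := by
  obtain ⟨v, hv⟩ := hne
  obtain ⟨M, hM⟩ := hT.1 v hv
  exact ⟨#M, by rw [← hM.card_eq, card_erase_add_one hv]⟩

end Graph

section Essential

variable {V : Type*} [DecidableEq V]

lemma isEssentialComponent_flip {A : V → V → Prop} {Y T : Finset V} :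
    IsEssentialComponent (fun u v => A v u) Y T ↔ IsEssentialComponent A Y T := by
  simp only [IsEssentialComponent, underOn_flip]
  refine and_congr_right fun _ => and_congr_right fun _ => and_congr_right fun _ => ?_
  exact forall₂_congr fun u _ => forall₂_congr fun v _ => and_comm.not

variable [Fintype V] {A : V → V → Prop} [DecidableRel A] {d : ℕ}

lemma IsEssentialComponent.two_mul_add_one_le (hdeg : ∀ v, d ≤ outdeg A v) {Y T : Finset V}
    (hT : IsEssentialComponent A Y T) : 2 * d + 1 ≤ #T + 2 * arcs A T Yᶜ := by
  obtain ⟨hTY, hcomp, htight, hanti⟩ := hT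
  have hne : T.Nonempty := let ⟨u, hu, _⟩ := hcomp; ⟨u, hu⟩
  obtain ⟨k, hk⟩ := htight.exists_card_eq hne
  have hinternal : ∑ v ∈ T, #{w ∈ T | A v w} ≤ ∑ _v ∈ T, k := by
    have h := two_mul_arcs_self_le A hanti
    rw [arcs_eq_sum, hk] at h
    have hpairs : (2 * k + 1) * (2 * k + 1) - (2 * k + 1) = 2 * ((2 * k + 1) * k) :=
      Nat.sub_eq_of_eq_add (by ring)
    rw [sum_const, smul_eq_mul, hk]
    omega
  obtain ⟨v, hv, hvk⟩ := exists_le_of_sum_le hne hinternal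
  have hout : univ.filter (fun w => A v w) ⊆
      T.filter (fun w => A v w) ∪ Yᶜ.filter (fun w => A v w) := by
    intro w hw
    rw [mem_filter] at hw
    by_cases hwY : w ∈ Y
    · by_cases hvw : v = w
      · exact mem_union_left _ (mem_filter.mpr ⟨hvw ▸ hv, hw.2⟩)
      · exact mem_union_left _ (mem_filter.mpr
          ⟨hcomp.mem_of_adj hv ⟨hvw, hTY hv, hwY, .inl hw.2⟩, hw.2⟩)
    · exact mem_union_right _ (mem_filter.mpr ⟨mem_compl.mpr hwY, hw.2⟩)
  have hvX : #{w ∈ Yᶜ | A v w} ≤ arcs A T Yᶜ := by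
    rw [arcs_eq_sum]
    exact single_le_sum (f := fun u => #{w ∈ Yᶜ | A u w}) (fun _ _ => Nat.zero_le _) hv
  have := (hdeg v).trans ((card_le_card hout).trans (card_union_le _ _))
  omega

lemma two_mul_add_one_mul_ncard_le (hdeg : ∀ v, d ≤ outdeg A v) (Y : Finset V) :
    (2 * d + 1) * Set.ncard {T : Finset V | IsEssentialComponent A Y T} ≤
      #Y + 2 * arcs A Y Yᶜ := by
  classical
  set 𝒮 := univ.filter (IsEssentialComponent A Y)
  have hmem : ∀ T ∈ 𝒮, IsEssentialComponent A Y T := fun T hT => (mem_filter.mp hT).2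
  have hdisj : (𝒮 : Set (Finset V)).PairwiseDisjoint id := fun T hT T' hT' hne =>
    disjoint_left.mpr fun w hw hw' =>
      hne ((hmem T hT).2.1.eq_of_mem (hmem T' hT').2.1 hw hw')
  have hcard : Set.ncard {T : Finset V | IsEssentialComponent A Y T} = #𝒮 := by
    rw [← Set.ncard_coe_finset, coe_filter_univ]
  calc (2 * d + 1) * Set.ncard {T : Finset V | IsEssentialComponent A Y T}
      = ∑ _T ∈ 𝒮, (2 * d + 1) := by rw [hcard, sum_const, smul_eq_mul, mul_comm]
    _ ≤ ∑ T ∈ 𝒮, (#T + 2 * arcs A T Yᶜ) :=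
      sum_le_sum fun T hT => (hmem T hT).two_mul_add_one_le hdeg
    _ ≤ #Y + 2 * arcs A Y Yᶜ := sum_card_add_two_mul_arcs_le A hdisj fun T hT => (hmem T hT).1

end Essential

theorem stmt5_general {V : Type*} [Fintype V] [DecidableEq V]
    (A : V → V → Prop) [DecidableRel A]
    (d : ℕ) (hdeg : ∀ v, d ≤ outdeg A v ∧ d ≤ indeg A v)
    (X : Finset V) (Y : Finset V) (hY : Y = Xᶜ)
    (τ : ℕ) (hτ : τ = Set.ncard {T : Finset V | IsEssentialComponent A Y T}) :
    (2 * d + 1) * τ ≤ Y.card + 2 * min (arcs A X Y) (arcs A Y X) := by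
  have hX : Yᶜ = X := by rw [hY, compl_compl]
  have hout := two_mul_add_one_mul_ncard_le (fun v => (hdeg v).1) Y
  have hin := two_mul_add_one_mul_ncard_le (A := fun u v => A v u) (fun v => (hdeg v).2) Y
  simp only [isEssentialComponent_flip, arcs_flip, hX] at hin hout
  subst hτ
  omega

/-- If `D` has minimum semidegree at least `d`, `X ⊆ V(D)`, `Y = V(D) \ X`, and `τ` is the
number of essential components of `D[Y]`, then `(2d+1)τ ≤ |Y| + 2·min{e(X,Y), e(Y,X)}`. -/
theorem stmt5 {V : Type*} [Fintype V] [DecidableEq V]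
    (A : V → V → Prop) [DecidableRel A] (hloop : ∀ v, ¬ A v v)
    (d : ℕ) (hdeg : ∀ v, d ≤ outdeg A v ∧ d ≤ indeg A v)
    (X : Finset V) (Y : Finset V) (hY : Y = Xᶜ)
    (τ : ℕ) (hτ : τ = Set.ncard {T : Finset V | IsEssentialComponent A Y T}) :
    (2 * d + 1) * τ ≤ Y.card + 2 * min (arcs A X Y) (arcs A Y X) :=
  stmt5_general A d hdeg X Y hY τ hτ
end

section
/- Let D be a digraph, X ⊆ V(D), Y = V(D)\X, with e(X)=0. Suppose the partition X = X1 ∪ X2 minimizes |θ(X1,X2)| over all partitions of X, and assume θ := θ(X1,X2) > 0. Then every vertex v ∈ X that is forward with respect to (X1,X2) satisfies s(v) ≥ θ; in particular at least one vertex v ∈ X satisfies s(v) ≥ θ. -/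
open Finset

/-- `s(v) = |d⁺(v) − d⁻(v)|` as an integer. -/
def sv {V : Type*} [Fintype V] (A : V → V → Prop) [DecidableRel A] (v : V) : ℤ :=
  |(outdeg A v : ℤ) - (indeg A v : ℤ)|

/-- The gap `θ(X1,X2) = (e(X1,Y)+e(Y,X2)) − (e(X2,Y)+e(Y,X1))`. -/
def gap {V : Type*} [Fintype V] [DecidableEq V] (A : V → V → Prop) [DecidableRel A]
    (Y X1 X2 : Finset V) : ℤ :=
  ((arcs A X1 Y : ℤ) + (arcs A Y X2 : ℤ)) - ((arcs A X2 Y : ℤ) + (arcs A Y X1 : ℤ))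

/-- `v` is a forward vertex with respect to the partition `(X1, X2)`. -/
def Forward {V : Type*} [Fintype V] (A : V → V → Prop) [DecidableRel A]
    (X1 X2 : Finset V) (v : V) : Prop :=
  (v ∈ X1 ∧ indeg A v < outdeg A v) ∨ (v ∈ X2 ∧ outdeg A v < indeg A v)

section helpers
set_option linter.unusedSectionVars false

variable {V : Type*} [Fintype V] [DecidableEq V] (A : V → V → Prop) [DecidableRel A]

lemma arcs_mono {S S' T T' : Finset V} (hS : S ⊆ S') (hT : T ⊆ T') :
    arcs A S T ≤ arcs A S' T' :=
  Finset.card_le_card (Finset.filter_subset_filter _ (Finset.product_subset_product hS hT))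

lemma arcs_union_left (S T Y : Finset V) (h : Disjoint S T) :
    arcs A (S ∪ T) Y = arcs A S Y + arcs A T Y := by
  unfold arcs
  rw [Finset.union_product, Finset.filter_union, Finset.card_union_of_disjoint]
  refine Finset.disjoint_filter_filter ?_
  rw [Finset.disjoint_left]
  intro p hp hq
  simp only [Finset.mem_product] at hp hq
  exact (Finset.disjoint_left.mp h hp.1) hq.1

lemma arcs_union_right (S T Y : Finset V) (h : Disjoint S T) :
    arcs A Y (S ∪ T) = arcs A Y S + arcs A Y T := by
  unfold arcs
  rw [Finset.product_union, Finset.filter_union, Finset.card_union_of_disjoint]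
  refine Finset.disjoint_filter_filter ?_
  rw [Finset.disjoint_left]
  intro p hp hq
  simp only [Finset.mem_product] at hp hq
  exact (Finset.disjoint_left.mp h hp.2) hq.2

lemma arcs_sum_left (S Y : Finset V) : arcs A S Y = ∑ v ∈ S, arcs A {v} Y := by
  induction S using Finset.induction_on with
  | empty => simp [arcs]
  | @insert a s ha ih =>
    rw [Finset.sum_insert ha, ← ih, Finset.insert_eq,
      arcs_union_left A _ _ _ (Finset.disjoint_singleton_left.mpr ha)]

lemma arcs_sum_right (S Y : Finset V) : arcs A Y S = ∑ v ∈ S, arcs A Y {v} := by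
  induction S using Finset.induction_on with
  | empty => simp [arcs]
  | @insert a s ha ih =>
    rw [Finset.sum_insert ha, ← ih, Finset.insert_eq,
      arcs_union_right A _ _ _ (Finset.disjoint_singleton_left.mpr ha)]

lemma outdeg_eq_arcs (v : V) : outdeg A v = arcs A {v} Finset.univ := by
  unfold outdeg arcs
  rw [Finset.singleton_product, Finset.filter_map, Finset.card_map]
  rfl

lemma indeg_eq_arcs (v : V) : indeg A v = arcs A Finset.univ {v} := by
  unfold indeg arcs
  rw [Finset.product_singleton, Finset.filter_map, Finset.card_map]
  rfl

end helpers

/-- Claim 1: if the partition `X = X1 ∪ X2` minimizes `|θ|` and `θ = θ(X1,X2) > 0`, then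
every forward vertex `v` satisfies `s(v) ≥ θ`; in particular some vertex of `X` is huge. -/
theorem stmt7 {V : Type*} [Fintype V] [DecidableEq V]
    (A : V → V → Prop) [DecidableRel A] (hloop : ∀ v, ¬ A v v)
    (X : Finset V) (Y : Finset V) (hY : Y = Xᶜ) (hEX : arcs A X X = 0)
    (X1 X2 : Finset V) (hpart : X1 ∪ X2 = X) (hdisj : Disjoint X1 X2)
    (hmin : ∀ X1' X2' : Finset V, X1' ∪ X2' = X → Disjoint X1' X2' →
      |gap A Y X1 X2| ≤ |gap A Y X1' X2'|)
    (θ : ℤ) (hθ : θ = gap A Y X1 X2) (hθpos : 0 < θ) :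
    (∀ v ∈ X, Forward A X1 X2 v → θ ≤ sv A v) ∧ (∃ v ∈ X, θ ≤ sv A v) := by
  subst hY
  have key : ∀ v ∈ X, (outdeg A v : ℤ) = (arcs A {v} Xᶜ : ℤ) ∧
      (indeg A v : ℤ) = (arcs A Xᶜ {v} : ℤ) := by
    intro v hv
    have hvX : ({v} : Finset V) ⊆ X := Finset.singleton_subset_iff.mpr hv
    have h1 : arcs A {v} X = 0 :=
      Nat.le_zero.mp (hEX ▸ arcs_mono A hvX Finset.Subset.rfl)
    have h2 : arcs A X {v} = 0 :=
      Nat.le_zero.mp (hEX ▸ arcs_mono A Finset.Subset.rfl hvX)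
    constructor
    · have h3 := outdeg_eq_arcs A v
      rw [← Finset.union_compl X,
        arcs_union_right A _ _ _ disjoint_compl_right, h1] at h3
      rw [h3]; push_cast; ring
    · have h3 := indeg_eq_arcs A v
      rw [← Finset.union_compl X,
        arcs_union_left A _ _ _ disjoint_compl_right, h2] at h3
      rw [h3]; push_cast; ring
  have hX1 : X1 ⊆ X := hpart ▸ Finset.subset_union_left
  have hX2 : X2 ⊆ X := hpart ▸ Finset.subset_union_right
  have main : ∀ v ∈ X, Forward A X1 X2 v → θ ≤ sv A v := by
    intro v hv hf
    have hkey := key v hv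
    set o : ℤ := (arcs A {v} Xᶜ : ℤ) with ho
    set i : ℤ := (arcs A Xᶜ {v} : ℤ) with hi
    have hsv : (outdeg A v : ℤ) - (indeg A v : ℤ) = o - i := by
      rw [hkey.1, hkey.2]
    obtain ⟨hv1, hlt⟩ | ⟨hv2, hlt⟩ := hf
    · -- move v from X1 to X2
      have hne : v ∉ X1.erase v := Finset.notMem_erase v X1
      have hu : (X1.erase v) ∪ (insert v X2) = X := by
        rw [Finset.union_insert, ← Finset.insert_union, Finset.insert_erase hv1, hpart]
      have hd : Disjoint (X1.erase v) (insert v X2) := by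
        rw [Finset.disjoint_insert_right]
        exact ⟨hne, Finset.disjoint_of_subset_left (Finset.erase_subset v X1) hdisj⟩
      have e1 : (arcs A X1 Xᶜ : ℤ) = (arcs A (X1.erase v) Xᶜ : ℤ) + o := by
        conv_lhs => rw [← Finset.insert_erase hv1, Finset.insert_eq,
          arcs_union_left A _ _ _ (Finset.disjoint_singleton_left.mpr hne)]
        push_cast; ring
      have e2 : (arcs A Xᶜ X1 : ℤ) = (arcs A Xᶜ (X1.erase v) : ℤ) + i := by
        conv_lhs => rw [← Finset.insert_erase hv1, Finset.insert_eq,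
          arcs_union_right A _ _ _ (Finset.disjoint_singleton_left.mpr hne)]
        push_cast; ring
      have hvn2 : v ∉ X2 := Finset.disjoint_left.mp hdisj hv1
      have e3 : (arcs A (insert v X2) Xᶜ : ℤ) = (arcs A X2 Xᶜ : ℤ) + o := by
        rw [Finset.insert_eq,
          arcs_union_left A _ _ _ (Finset.disjoint_singleton_left.mpr hvn2)]
        push_cast; ring
      have e4 : (arcs A Xᶜ (insert v X2) : ℤ) = (arcs A Xᶜ X2 : ℤ) + i := by
        rw [Finset.insert_eq,
          arcs_union_right A _ _ _ (Finset.disjoint_singleton_left.mpr hvn2)]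
        push_cast; ring
      have hgap : gap A Xᶜ (X1.erase v) (insert v X2) = θ - 2 * (o - i) := by
        rw [hθ]; unfold gap
        rw [e1, e2, e3, e4] ; ring
      have hm := hmin _ _ hu hd
      rw [hgap, ← hθ, abs_of_pos hθpos] at hm
      have hoi : i < o := by
        have := hkey.1; have := hkey.2
        have : (indeg A v : ℤ) < (outdeg A v : ℤ) := by exact_mod_cast hlt
        omega
      have hθd : θ ≤ o - i := by
        rcases abs_cases (θ - 2 * (o - i)) with ⟨h, _⟩ | ⟨h, _⟩ <;> omega
      rw [sv, hsv, abs_of_pos (by omega : (0:ℤ) < o - i)]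
      omega
    · -- move v from X2 to X1
      have hne : v ∉ X2.erase v := Finset.notMem_erase v X2
      have hu : (insert v X1) ∪ (X2.erase v) = X := by
        rw [Finset.insert_union, ← Finset.union_insert, Finset.insert_erase hv2, hpart]
      have hd : Disjoint (insert v X1) (X2.erase v) := by
        rw [Finset.disjoint_insert_left]
        exact ⟨hne, Finset.disjoint_of_subset_right (Finset.erase_subset v X2) hdisj⟩
      have e1 : (arcs A X2 Xᶜ : ℤ) = (arcs A (X2.erase v) Xᶜ : ℤ) + o := by
        conv_lhs => rw [← Finset.insert_erase hv2, Finset.insert_eq,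
          arcs_union_left A _ _ _ (Finset.disjoint_singleton_left.mpr hne)]
        push_cast; ring
      have e2 : (arcs A Xᶜ X2 : ℤ) = (arcs A Xᶜ (X2.erase v) : ℤ) + i := by
        conv_lhs => rw [← Finset.insert_erase hv2, Finset.insert_eq,
          arcs_union_right A _ _ _ (Finset.disjoint_singleton_left.mpr hne)]
        push_cast; ring
      have hvn1 : v ∉ X1 := Finset.disjoint_right.mp hdisj hv2
      have e3 : (arcs A (insert v X1) Xᶜ : ℤ) = (arcs A X1 Xᶜ : ℤ) + o := by
        rw [Finset.insert_eq,
          arcs_union_left A _ _ _ (Finset.disjoint_singleton_left.mpr hvn1)]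
        push_cast; ring
      have e4 : (arcs A Xᶜ (insert v X1) : ℤ) = (arcs A Xᶜ X1 : ℤ) + i := by
        rw [Finset.insert_eq,
          arcs_union_right A _ _ _ (Finset.disjoint_singleton_left.mpr hvn1)]
        push_cast; ring
      have hgap : gap A Xᶜ (insert v X1) (X2.erase v) = θ - 2 * (i - o) := by
        rw [hθ]; unfold gap
        rw [e1, e2, e3, e4]; ring
      have hm := hmin _ _ hu hd
      rw [hgap, ← hθ, abs_of_pos hθpos] at hm
      have hoi : o < i := by
        have := hkey.1; have := hkey.2
        have : (outdeg A v : ℤ) < (indeg A v : ℤ) := by exact_mod_cast hlt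
        omega
      have hθd : θ ≤ i - o := by
        rcases abs_cases (θ - 2 * (i - o)) with ⟨h, _⟩ | ⟨h, _⟩ <;> omega
      rw [sv, hsv, abs_of_neg (by omega : o - i < (0:ℤ))]
      omega
  refine ⟨main, ?_⟩
  by_contra hc
  push_neg at hc
  have hnf : ∀ v ∈ X, ¬ Forward A X1 X2 v := fun v hv hf =>
    absurd (main v hv hf) (not_le.mpr (hc v hv))
  have s1 : ∑ v ∈ X1, ((outdeg A v : ℤ) - (indeg A v : ℤ)) =
      (arcs A X1 Xᶜ : ℤ) - (arcs A Xᶜ X1 : ℤ) := by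
    rw [Finset.sum_sub_distrib]
    congr 1
    · rw [arcs_sum_left A X1 Xᶜ]; push_cast
      exact Finset.sum_congr rfl fun v hv => (key v (hX1 hv)).1
    · rw [arcs_sum_right A X1 Xᶜ]; push_cast
      exact Finset.sum_congr rfl fun v hv => (key v (hX1 hv)).2
  have s2 : ∑ v ∈ X2, ((indeg A v : ℤ) - (outdeg A v : ℤ)) =
      (arcs A Xᶜ X2 : ℤ) - (arcs A X2 Xᶜ : ℤ) := by
    rw [Finset.sum_sub_distrib]
    congr 1
    · rw [arcs_sum_right A X2 Xᶜ]; push_cast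
      exact Finset.sum_congr rfl fun v hv => (key v (hX2 hv)).2
    · rw [arcs_sum_left A X2 Xᶜ]; push_cast
      exact Finset.sum_congr rfl fun v hv => (key v (hX2 hv)).1
  have t1 : ∑ v ∈ X1, ((outdeg A v : ℤ) - (indeg A v : ℤ)) ≤ 0 :=
    Finset.sum_nonpos fun v hv => by
      have h := hnf v (hX1 hv)
      rw [Forward] at h
      push_neg at h
      have := h.1 hv
      omega
  have t2 : ∑ v ∈ X2, ((indeg A v : ℤ) - (outdeg A v : ℤ)) ≤ 0 :=
    Finset.sum_nonpos fun v hv => by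
      have h := hnf v (hX2 hv)
      rw [Forward] at h
      push_neg at h
      have := h.2 hv
      omega
  rw [s1] at t1
  rw [s2] at t2
  rw [hθ] at hθpos
  unfold gap at hθpos
  omega
end

section
/- With the setup of a gap-minimizing partition: let X = X1 ∪ X2 minimize |θ(X1,X2)| with θ = θ(X1,X2) > 0, let X' = {v ∈ X : s(v) ≥ θ} be the huge vertices and g = Σ_{v ∈ X∖X'} s(v). Then every forward vertex v ∈ X satisfies s(v) ≥ θ + g. -/
open Finset

lemma aux_dense {V : Type*} [DecidableEq V] (θ : ℤ) (s : V → ℤ) :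
    ∀ (M : Finset V) (t : ℤ), 0 ≤ t → t ≤ ∑ w ∈ M, s w →
      (∀ w ∈ M, 0 ≤ s w ∧ s w ≤ θ - 1) →
      ∃ S ⊆ M, (∑ w ∈ S, s w) ≤ t ∧ (t ≤ ∑ w ∈ S, s w ∨ t - ∑ w ∈ S, s w ≤ θ - 2) := by
  intro M
  induction M using Finset.strongInduction with
  | _ M ih =>
    intro t ht0 htM hsmall
    by_cases hex : ∃ w ∈ M, 0 < s w ∧ s w ≤ t
    · obtain ⟨w, hwM, hws, hwt⟩ := hex
      have hsum : ∑ x ∈ M.erase w, s x = (∑ x ∈ M, s x) - s w := by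
        rw [← Finset.add_sum_erase M s hwM]; ring
      obtain ⟨S, hSsub, h1, h2⟩ := ih (M.erase w) (Finset.erase_ssubset hwM)
        (t - s w) (by linarith) (by rw [hsum]; linarith)
        (fun x hx => hsmall x (Finset.mem_of_mem_erase hx))
      have hwS : w ∉ S := fun h => Finset.notMem_erase w M (hSsub h)
      refine ⟨insert w S, ?_, ?_, ?_⟩
      · intro x hx
        rcases Finset.mem_insert.mp hx with h | h
        · exact h ▸ hwM
        · exact Finset.mem_of_mem_erase (hSsub h)
      · rw [Finset.sum_insert hwS]; linarith
      · rw [Finset.sum_insert hwS]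
        rcases h2 with h | h
        · left; linarith
        · right; linarith
    · push_neg at hex
      by_cases ht : t = 0
      · exact ⟨∅, Finset.empty_subset _, by simp [ht], Or.inl (by simp [ht])⟩
      · have ht' : 0 < t := lt_of_le_of_ne ht0 (Ne.symm ht)
        by_cases hex2 : ∃ w ∈ M, 0 < s w
        · obtain ⟨w, hwM, hws⟩ := hex2
          have h3 := hex w hwM hws
          have h4 := (hsmall w hwM).2
          exact ⟨∅, Finset.empty_subset _, by simpa using le_of_lt ht',
            Or.inr (by simp; linarith)⟩
        · push_neg at hex2
          have : ∑ w ∈ M, s w ≤ 0 := Finset.sum_nonpos (fun w hw => hex2 w hw)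
          linarith

set_option linter.unusedSectionVars false
section
variable {V : Type*} [Fintype V] [DecidableEq V] (A : V → V → Prop) [DecidableRel A]
  (X Y : Finset V)

lemma aux_noXX (hEX : arcs A X X = 0) : ∀ a ∈ X, ∀ b ∈ X, ¬ A a b := by
  intro a ha b hb hab
  have h0 : ((X ×ˢ X).filter (fun p => A p.1 p.2)) = ∅ := Finset.card_eq_zero.mp hEX
  have : (a, b) ∈ ((X ×ˢ X).filter (fun p => A p.1 p.2)) := by
    simp [Finset.mem_filter, Finset.mem_product, ha, hb, hab]
  rw [h0] at this
  exact absurd this (Finset.notMem_empty _)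

lemma aux_arcs_out (hY : Y = Xᶜ) (hEX : arcs A X X = 0) :
    ∀ Z : Finset V, Z ⊆ X → (arcs A Z Y : ℤ) = ∑ w ∈ Z, (outdeg A w : ℤ) := by
  intro Z hZ
  have hno := aux_noXX A X hEX
  have h1 : arcs A Z Y = ∑ w ∈ Z, (Y.filter (fun y => A w y)).card := by
    rw [arcs, Finset.card_filter, Finset.sum_product]
    exact Finset.sum_congr rfl fun w _ => (Finset.card_filter _ _).symm
  have h2 : ∀ w ∈ Z, (Y.filter (fun y => A w y)).card = outdeg A w := by
    intro w hw
    rw [outdeg]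
    congr 1
    ext y
    simp only [Finset.mem_filter, Finset.mem_univ, true_and, hY, Finset.mem_compl]
    constructor
    · rintro ⟨_, h⟩; exact h
    · intro h; exact ⟨fun hyX => hno w (hZ hw) y hyX h, h⟩
  rw [h1]
  push_cast
  exact Finset.sum_congr rfl fun w hw => by rw [h2 w hw]

lemma aux_arcs_in (hY : Y = Xᶜ) (hEX : arcs A X X = 0) :
    ∀ Z : Finset V, Z ⊆ X → (arcs A Y Z : ℤ) = ∑ w ∈ Z, (indeg A w : ℤ) := by
  intro Z hZ
  have hno := aux_noXX A X hEX
  have h1 : arcs A Y Z = ∑ w ∈ Z, (Y.filter (fun y => A y w)).card := by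
    rw [arcs, Finset.card_filter, Finset.sum_product, Finset.sum_comm]
    exact Finset.sum_congr rfl fun w _ => (Finset.card_filter _ _).symm
  have h2 : ∀ w ∈ Z, (Y.filter (fun y => A y w)).card = indeg A w := by
    intro w hw
    rw [indeg]
    congr 1
    ext y
    simp only [Finset.mem_filter, Finset.mem_univ, true_and, hY, Finset.mem_compl]
    constructor
    · rintro ⟨_, h⟩; exact h
    · intro h; exact ⟨fun hyX => hno y hyX w (hZ hw) h, h⟩
  rw [h1]
  push_cast
  exact Finset.sum_congr rfl fun w hw => by rw [h2 w hw]

end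

/-- Claim 2: with the gap-minimizing partition, `X'` the set of huge vertices and
`g = Σ_{v ∈ X∖X'} s(v)`, every forward vertex `v` satisfies `s(v) ≥ θ + g`. -/
theorem stmt8 {V : Type*} [Fintype V] [DecidableEq V]
    (A : V → V → Prop) [DecidableRel A] (hloop : ∀ v, ¬ A v v)
    (X : Finset V) (Y : Finset V) (hY : Y = Xᶜ) (hEX : arcs A X X = 0)
    (X1 X2 : Finset V) (hpart : X1 ∪ X2 = X) (hdisj : Disjoint X1 X2)
    (hmin : ∀ X1' X2' : Finset V, X1' ∪ X2' = X → Disjoint X1' X2' →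
      |gap A Y X1 X2| ≤ |gap A Y X1' X2'|)
    (θ : ℤ) (hθ : θ = gap A Y X1 X2) (hθpos : 0 < θ)
    (X' : Finset V) (hX' : X' = X.filter (fun v => θ ≤ sv A v))
    (g : ℤ) (hg : g = ∑ v ∈ X \ X', sv A v) :
    ∀ v ∈ X, Forward A X1 X2 v → θ + g ≤ sv A v := by
  classical
  intro v hvX hfwd
  set δ : V → ℤ := fun w => (outdeg A w : ℤ) - (indeg A w : ℤ) with hδdef
  -- gap formula
  have hgap : ∀ X1' X2' : Finset V, X1' ∪ X2' = X →
      gap A Y X1' X2' = (∑ w ∈ X1', δ w) - ∑ w ∈ X2', δ w := by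
    intro X1' X2' hu
    have h1 : X1' ⊆ X := hu ▸ Finset.subset_union_left
    have h2 : X2' ⊆ X := hu ▸ Finset.subset_union_right
    rw [gap, aux_arcs_out A X Y hY hEX X1' h1, aux_arcs_out A X Y hY hEX X2' h2,
      aux_arcs_in A X Y hY hEX X1' h1, aux_arcs_in A X Y hY hEX X2' h2]
    simp only [hδdef, Finset.sum_sub_distrib]
    ring
  set ε : V → ℤ := fun w => if w ∈ X1 then δ w else -δ w with hεdef
  have hθsum : θ = ∑ w ∈ X, ε w := by
    rw [hθ, hgap X1 X2 hpart, ← hpart, Finset.sum_union hdisj]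
    have e1 : ∑ w ∈ X1, ε w = ∑ w ∈ X1, δ w :=
      Finset.sum_congr rfl fun w hw => by simp [hεdef, hw]
    have e2 : ∑ w ∈ X2, ε w = ∑ w ∈ X2, -δ w :=
      Finset.sum_congr rfl fun w hw => by
        have : w ∉ X1 := fun h => (Finset.disjoint_left.mp hdisj h) hw
        simp [hεdef, this]
    rw [e1, e2, Finset.sum_neg_distrib]
    ring
  -- the key flip inequality
  have keyflip : ∀ F : Finset V, F ⊆ X → |θ| ≤ |θ - 2 * ∑ w ∈ F, ε w| := by
    intro F hF
    set p : V → Prop := fun w => (w ∈ X1 ↔ w ∉ F) with hp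
    set X1' := X.filter p with hX1'
    set X2' := X.filter (fun w => ¬ p w) with hX2'
    have hu : X1' ∪ X2' = X := Finset.filter_union_filter_not_eq p X
    have hd : Disjoint X1' X2' := Finset.disjoint_filter_filter_not X X p
    have hm := hmin X1' X2' hu hd
    rw [hgap X1' X2' hu] at hm
    have e1 : (∑ w ∈ X1', δ w) - ∑ w ∈ X2', δ w
        = ∑ w ∈ X, (if p w then δ w else -δ w) := by
      rw [hX1', hX2', Finset.sum_filter, Finset.sum_filter, ← Finset.sum_sub_distrib]
      apply Finset.sum_congr rfl
      intro w _
      by_cases h1 : w ∈ X1 <;> by_cases h2 : w ∈ F <;> simp [hp, h1, h2]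
    have e2 : ∑ w ∈ X, (if p w then δ w else -δ w) = θ - 2 * ∑ w ∈ F, ε w := by
      have hFX : ∑ w ∈ F, ε w = ∑ w ∈ X, (if w ∈ F then ε w else 0) := by
        rw [← Finset.sum_filter, Finset.filter_mem_eq_inter,
          Finset.inter_eq_right.mpr hF]
      rw [hθsum, hFX, Finset.mul_sum, ← Finset.sum_sub_distrib]
      apply Finset.sum_congr rfl
      intro w _
      by_cases h1 : w ∈ X1 <;> by_cases h2 : w ∈ F <;>
        simp [hp, hεdef, h1, h2] <;> ring
    rw [e1, e2] at hm
    rw [← hθ] at hm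
    exact hm
  have habsθ : |θ| = θ := abs_of_pos hθpos
  have hsv_eq : ∀ w, sv A w = |δ w| := fun w => rfl
  have hεabs : ∀ w, |ε w| = sv A w := by
    intro w
    rw [hsv_eq]
    by_cases h : w ∈ X1 <;> simp [hεdef, h, abs_neg]
  have hsvnn : ∀ w, 0 ≤ sv A w := fun w => abs_nonneg _
  -- single flips
  have hflip1 : ∀ w ∈ X, |θ| ≤ |θ - 2 * ε w| := by
    intro w hw
    have := keyflip {w} (Finset.singleton_subset_iff.mpr hw)
    simpa using this
  -- small vertices have ε = -sv
  have hsmallneg : ∀ w ∈ X, sv A w < θ → ε w = -(sv A w) := by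
    intro w hw hlt
    have hk := hflip1 w hw
    rw [habsθ] at hk
    rcases (abs_eq (hsvnn w)).mp (hεabs w) with h | h
    · by_cases h0 : sv A w = 0
      · rw [h, h0]; ring
      · have h1 : 0 < sv A w := lt_of_le_of_ne (hsvnn w) (Ne.symm h0)
        rcases abs_cases (θ - 2 * ε w) with ⟨he, _⟩ | ⟨he, _⟩ <;> rw [he] at hk <;>
          rw [h] at hk <;> linarith
    · exact h
  -- forward vertex facts
  have hfε : ε v = sv A v ∧ 0 < sv A v := by
    rcases hfwd with ⟨h1, h2⟩ | ⟨h1, h2⟩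
    · have hd : 0 < δ v := by
        simp only [hδdef]
        omega
      constructor
      · rw [hsv_eq, abs_of_pos hd]; simp [hεdef, h1]
      · rw [hsv_eq]; exact abs_pos.mpr (ne_of_gt hd)
    · have hv1 : v ∉ X1 := fun h => (Finset.disjoint_left.mp hdisj h) h1
      have hd : δ v < 0 := by
        simp only [hδdef]
        omega
      constructor
      · rw [hsv_eq, abs_of_neg hd]; simp [hεdef, hv1]
      · rw [hsv_eq]; exact abs_pos.mpr (ne_of_lt hd)
  have hvθ : θ ≤ sv A v := by
    have hk := hflip1 v hvX
    rw [habsθ, hfε.1] at hk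
    rcases abs_cases (θ - 2 * sv A v) with ⟨he, _⟩ | ⟨he, _⟩ <;> rw [he] at hk <;>
      [linarith [hfε.2]; linarith]
  -- small vertex membership
  have hmem_small : ∀ w ∈ X \ X', w ∈ X ∧ sv A w < θ := by
    intro w hw
    rw [Finset.mem_sdiff, hX', Finset.mem_filter] at hw
    refine ⟨hw.1, ?_⟩
    by_contra h
    push_neg at h
    exact hw.2 ⟨hw.1, h⟩
  have hg0 : 0 ≤ g := hg ▸ Finset.sum_nonneg fun w _ => hsvnn w
  -- main contradiction
  by_contra hcon
  push_neg at hcon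
  by_cases hgz : g = 0
  · rw [hgz] at hcon; linarith
  have hgpos : 0 < g := lt_of_le_of_ne hg0 (Ne.symm hgz)
  have hθ2 : 2 ≤ θ := by
    by_contra h
    push_neg at h
    have hθ1 : θ = 1 := le_antisymm (by linarith) hθpos
    have : g = 0 := by
      rw [hg]
      apply Finset.sum_eq_zero
      intro w hw
      have h1 := (hmem_small w hw).2
      have h2 := hsvnn w
      omega
    exact hgz this
  have hvnotsmall : v ∉ X \ X' := by
    intro h
    exact absurd (hmem_small v h).2 (not_lt.mpr hvθ)
  -- obtain the flip set S among the small vertices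
  have hexS : ∃ S ⊆ X \ X', sv A v - θ < ∑ w ∈ S, sv A w ∧ ∑ w ∈ S, sv A w < sv A v := by
    by_cases hgle : g ≤ sv A v - 1
    · exact ⟨X \ X', Finset.Subset.refl _, by rw [← hg]; linarith, by rw [← hg]; linarith⟩
    · push_neg at hgle
      obtain ⟨S, hS, h1, h2⟩ := aux_dense θ (sv A) (X \ X') (sv A v - 1)
        (by linarith) (by rw [← hg]; linarith)
        (fun w hw => ⟨hsvnn w, by linarith [(hmem_small w hw).2]⟩)
      refine ⟨S, hS, ?_, by linarith⟩
      rcases h2 with h | h <;> linarith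
  obtain ⟨S, hS, hlow, hhigh⟩ := hexS
  have hvS : v ∉ S := fun h => hvnotsmall (hS h)
  have hSX : S ⊆ X := hS.trans (Finset.sdiff_subset)
  have hFX : insert v S ⊆ X := Finset.insert_subset hvX hSX
  have hSsum : ∑ w ∈ S, ε w = -∑ w ∈ S, sv A w := by
    rw [← Finset.sum_neg_distrib]
    exact Finset.sum_congr rfl fun w hw =>
      hsmallneg w (hmem_small w (hS hw)).1 (hmem_small w (hS hw)).2
  have hFsum : ∑ w ∈ insert v S, ε w = sv A v - ∑ w ∈ S, sv A w := by
    rw [Finset.sum_insert hvS, hfε.1, hSsum]; ring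
  have hk := keyflip (insert v S) hFX
  rw [habsθ, hFsum] at hk
  rcases abs_cases (θ - 2 * (sv A v - ∑ w ∈ S, sv A w)) with ⟨he, _⟩ | ⟨he, _⟩ <;>
    rw [he] at hk <;> linarith
end

section
/- Gap-minimizing partition, Claim 4 (first part): let X = X1 ∪ X2 minimize |θ(X1,X2)| with θ = θ(X1,X2) > 0, let X' = {v ∈ X : s(v) ≥ θ}, α = |X'| ≥ 1, β = ⌈α/2⌉, and b = Σ_{v∈X} min{d⁺(v), d⁻(v)}. Then max{e(X,Y), e(Y,X)} ≥ βθ + b. -/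
open Finset

/-- Claim 4, first part: with the gap-minimizing partition, `X'` the huge vertices,
`α = |X'| ≥ 1`, `β = ⌈α/2⌉` and `b = Σ_{v∈X} min{d⁺(v),d⁻(v)}`:
`max{e(X,Y), e(Y,X)} ≥ βθ + b`. -/
theorem stmt11 {V : Type*} [Fintype V] [DecidableEq V]
    (A : V → V → Prop) [DecidableRel A] (hloop : ∀ v, ¬ A v v)
    (X : Finset V) (Y : Finset V) (hY : Y = Xᶜ) (hEX : arcs A X X = 0)
    (X1 X2 : Finset V) (hpart : X1 ∪ X2 = X) (hdisj : Disjoint X1 X2)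
    (hmin : ∀ X1' X2' : Finset V, X1' ∪ X2' = X → Disjoint X1' X2' →
      |gap A Y X1 X2| ≤ |gap A Y X1' X2'|)
    (θ : ℤ) (hθ : θ = gap A Y X1 X2) (hθpos : 0 < θ)
    (X' : Finset V) (hX' : X' = X.filter (fun v => θ ≤ sv A v))
    (α : ℕ) (hα : α = X'.card) (hα1 : 1 ≤ α)
    (β : ℕ) (hβ : β = (α + 1) / 2)
    (b : ℤ) (hb : b = ∑ v ∈ X, (min (outdeg A v) (indeg A v) : ℤ)) :
    (β : ℤ) * θ + b ≤ max (arcs A X Y : ℤ) (arcs A Y X : ℤ) := by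
  have hθnn : (0:ℤ) ≤ θ := le_of_lt hθpos
  subst hY hb
  -- no arcs within X
  simp only [arcs] at hEX
  have hno : ∀ v ∈ X, ∀ w ∈ X, ¬ A v w := by
    intro v hv w hw hA
    have h := Finset.card_eq_zero.mp hEX
    have hmem : (v, w) ∈ (X ×ˢ X).filter (fun p => A p.1 p.2) := by
      simp [Finset.mem_filter, Finset.mem_product, hv, hw, hA]
    rw [h] at hmem
    exact absurd hmem (Finset.notMem_empty _)
  have hcard : ∀ S T : Finset V,
      (arcs A S T : ℤ) = ∑ v ∈ S, ∑ w ∈ T, (if A v w then (1:ℤ) else 0) := by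
    intro S T
    simp only [arcs, Finset.card_filter]
    push_cast
    rw [Finset.sum_product]
  have hout : ∀ v, (outdeg A v : ℤ) = ∑ w : V, (if A v w then (1:ℤ) else 0) := by
    intro v
    simp only [outdeg, Finset.card_filter]
    push_cast
    rfl
  have hin : ∀ v, (indeg A v : ℤ) = ∑ w : V, (if A w v then (1:ℤ) else 0) := by
    intro v
    simp only [indeg, Finset.card_filter]
    push_cast
    rfl
  have hXY : (arcs A X Xᶜ : ℤ) = ∑ v ∈ X, (outdeg A v : ℤ) := by
    rw [hcard]
    refine Finset.sum_congr rfl fun v hv => ?_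
    rw [hout v, ← Finset.sum_add_sum_compl X (fun w => if A v w then (1:ℤ) else 0)]
    have h0 : ∑ w ∈ X, (if A v w then (1:ℤ) else 0) = 0 :=
      Finset.sum_eq_zero fun w hw => if_neg (hno v hv w hw)
    rw [h0, zero_add]
  have hYX : (arcs A Xᶜ X : ℤ) = ∑ v ∈ X, (indeg A v : ℤ) := by
    rw [hcard, Finset.sum_comm]
    refine Finset.sum_congr rfl fun v hv => ?_
    rw [hin v, ← Finset.sum_add_sum_compl X (fun w => if A w v then (1:ℤ) else 0)]
    have h0 : ∑ w ∈ X, (if A w v then (1:ℤ) else 0) = 0 :=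
      Finset.sum_eq_zero fun w hw => if_neg (hno w hw v hv)
    rw [h0, zero_add]
  -- pigeonhole on direction of surplus among huge vertices
  set P := X'.filter (fun v => indeg A v ≤ outdeg A v) with hP
  set N := X'.filter (fun v => ¬ indeg A v ≤ outdeg A v) with hN
  have hPN : P.card + N.card = X'.card :=
    Finset.card_filter_add_card_filter_not _
  have hcases : β ≤ P.card ∨ β ≤ N.card := by omega
  have hsplit : ∑ v ∈ X, (outdeg A v : ℤ)
      = (∑ v ∈ X, (min (outdeg A v) (indeg A v) : ℤ))
        + ∑ v ∈ X, ((outdeg A v : ℤ) - (min (outdeg A v) (indeg A v) : ℤ)) := by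
    rw [← Finset.sum_add_distrib]
    exact Finset.sum_congr rfl fun v _ => by ring
  have hsplit' : ∑ v ∈ X, (indeg A v : ℤ)
      = (∑ v ∈ X, (min (outdeg A v) (indeg A v) : ℤ))
        + ∑ v ∈ X, ((indeg A v : ℤ) - (min (outdeg A v) (indeg A v) : ℤ)) := by
    rw [← Finset.sum_add_distrib]
    exact Finset.sum_congr rfl fun v _ => by ring
  rcases hcases with hc | hc
  · -- forward surplus majority: bound e(X,Y)
    refine le_trans ?_ (le_max_left _ _)
    rw [hXY, hsplit]
    have hPsub : P ⊆ X := fun v hv => by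
      have h1 := (Finset.mem_filter.mp hv).1
      rw [hX'] at h1
      exact (Finset.mem_filter.mp h1).1
    have hterm : ∀ v ∈ P, θ ≤ (outdeg A v : ℤ) - (min (outdeg A v) (indeg A v) : ℤ) := by
      intro v hv
      obtain ⟨hvX', hvle⟩ := Finset.mem_filter.mp hv
      rw [hX'] at hvX'
      obtain ⟨hvX, hvθ⟩ := Finset.mem_filter.mp hvX'
      have h1 : (indeg A v : ℤ) ≤ (outdeg A v : ℤ) := by exact_mod_cast hvle
      rw [sv, abs_of_nonneg (by linarith)] at hvθ
      rw [min_eq_right h1]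
      linarith
    have hsum : (β : ℤ) * θ ≤ ∑ v ∈ P,
        ((outdeg A v : ℤ) - (min (outdeg A v) (indeg A v) : ℤ)) := by
      calc (β : ℤ) * θ ≤ (P.card : ℤ) * θ :=
            mul_le_mul_of_nonneg_right (by exact_mod_cast hc) hθnn
        _ = ∑ _v ∈ P, θ := by rw [Finset.sum_const, nsmul_eq_mul]
        _ ≤ _ := Finset.sum_le_sum hterm
    have hmono : ∑ v ∈ P, ((outdeg A v : ℤ) - (min (outdeg A v) (indeg A v) : ℤ))
        ≤ ∑ v ∈ X, ((outdeg A v : ℤ) - (min (outdeg A v) (indeg A v) : ℤ)) := by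
      refine Finset.sum_le_sum_of_subset_of_nonneg hPsub fun v _ _ => ?_
      have := min_le_left (outdeg A v) (indeg A v)
      have : (min (outdeg A v) (indeg A v) : ℤ) ≤ (outdeg A v : ℤ) := by exact_mod_cast this
      linarith
    linarith
  · -- backward surplus majority: bound e(Y,X)
    refine le_trans ?_ (le_max_right _ _)
    rw [hYX, hsplit']
    have hNsub : N ⊆ X := fun v hv => by
      have h1 := (Finset.mem_filter.mp hv).1
      rw [hX'] at h1
      exact (Finset.mem_filter.mp h1).1
    have hterm : ∀ v ∈ N, θ ≤ (indeg A v : ℤ) - (min (outdeg A v) (indeg A v) : ℤ) := by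
      intro v hv
      obtain ⟨hvX', hvlt⟩ := Finset.mem_filter.mp hv
      rw [hX'] at hvX'
      obtain ⟨hvX, hvθ⟩ := Finset.mem_filter.mp hvX'
      have hvle : outdeg A v ≤ indeg A v := le_of_not_ge hvlt
      have h1 : (outdeg A v : ℤ) ≤ (indeg A v : ℤ) := by exact_mod_cast hvle
      rw [sv, abs_of_nonpos (by linarith)] at hvθ
      rw [min_eq_left h1]
      linarith
    have hsum : (β : ℤ) * θ ≤ ∑ v ∈ N,
        ((indeg A v : ℤ) - (min (outdeg A v) (indeg A v) : ℤ)) := by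
      calc (β : ℤ) * θ ≤ (N.card : ℤ) * θ :=
            mul_le_mul_of_nonneg_right (by exact_mod_cast hc) hθnn
        _ = ∑ _v ∈ N, θ := by rw [Finset.sum_const, nsmul_eq_mul]
        _ ≤ _ := Finset.sum_le_sum hterm
    have hmono : ∑ v ∈ N, ((indeg A v : ℤ) - (min (outdeg A v) (indeg A v) : ℤ))
        ≤ ∑ v ∈ X, ((indeg A v : ℤ) - (min (outdeg A v) (indeg A v) : ℤ)) := by
      refine Finset.sum_le_sum_of_subset_of_nonneg hNsub fun v _ _ => ?_
      have := min_le_right (outdeg A v) (indeg A v)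
      have : (min (outdeg A v) (indeg A v) : ℤ) ≤ (indeg A v : ℤ) := by exact_mod_cast this
      linarith
    linarith
end

section
/- Gap-minimizing partition, Claim 5: let X = X1 ∪ X2 minimize |θ(X1,X2)| with θ > 0, let X' = {v ∈ X : s(v) ≥ θ} have size α with largest surplus Δ1 = max_{v∈X'} s(v), β = ⌈α/2⌉, and b = Σ_{v∈X} min{d⁺(v), d⁻(v)}. Assume 0 ≤ g ≤ Δ1 − θ where g = Σ_{v∈X∖X'} s(v) (which holds by Claim 2), and that θ = Σ_{forward v} s(v) − Σ_{backward v} s(v). Then min{e(X,Y), e(Y,X)} ≤ 2βΔ1 − (β+1)θ + b. -/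
open Finset

instance {V : Type*} [Fintype V] [DecidableEq V] (A : V → V → Prop) [DecidableRel A]
    (X1 X2 : Finset V) (v : V) : Decidable (Forward A X1 X2 v) := by
  unfold Forward; exact inferInstance

lemma arcs_sum_fst {V : Type*} [DecidableEq V] (A : V → V → Prop) [DecidableRel A]
    (X Z : Finset V) : arcs A X Z = ∑ v ∈ X, (Z.filter (fun w => A v w)).card := by
  unfold arcs
  rw [Finset.card_filter, Finset.sum_product]
  exact Finset.sum_congr rfl fun v _ => (Finset.card_filter _ _).symm

lemma arcs_sum_snd {V : Type*} [DecidableEq V] (A : V → V → Prop) [DecidableRel A]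
    (X Z : Finset V) : arcs A Z X = ∑ v ∈ X, (Z.filter (fun w => A w v)).card := by
  unfold arcs
  rw [Finset.card_filter, Finset.sum_product, Finset.sum_comm]
  exact Finset.sum_congr rfl fun v _ => (Finset.card_filter _ _).symm

lemma int_min_max (a b : ℤ) : a = min a b + max (a - b) 0 := by
  rcases le_total a b with h | h
  · rw [min_eq_left h, max_eq_right (by linarith)]; ring
  · rw [min_eq_right h, max_eq_left (by linarith)]; ring

lemma int_abs_max (a b : ℤ) : |a - b| = max (a - b) 0 + max (b - a) 0 := by
  rcases le_total a b with h | h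
  · rw [abs_of_nonpos (by linarith), max_eq_right (by linarith), max_eq_left (by linarith)]; ring
  · rw [abs_of_nonneg (by linarith), max_eq_left (by linarith), max_eq_right (by linarith)]; ring

/-- Claim 5: with the gap-minimizing partition, `Δ1 = max_{v∈X'} s(v)`, `β = ⌈α/2⌉`,
`0 ≤ g ≤ Δ1 − θ` and `θ = Σ_{forward v} s(v) − Σ_{backward v} s(v)`:
`min{e(X,Y), e(Y,X)} ≤ 2βΔ1 − (β+1)θ + b`. -/
theorem stmt13 {V : Type*} [Fintype V] [DecidableEq V]
    (A : V → V → Prop) [DecidableRel A] (hloop : ∀ v, ¬ A v v)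
    (X : Finset V) (Y : Finset V) (hY : Y = Xᶜ) (hEX : arcs A X X = 0)
    (X1 X2 : Finset V) (hpart : X1 ∪ X2 = X) (hdisj : Disjoint X1 X2)
    (hmin : ∀ X1' X2' : Finset V, X1' ∪ X2' = X → Disjoint X1' X2' →
      |gap A Y X1 X2| ≤ |gap A Y X1' X2'|)
    (θ : ℤ) (hθ : θ = gap A Y X1 X2) (hθpos : 0 < θ)
    (X' : Finset V) (hX' : X' = X.filter (fun v => θ ≤ sv A v))
    (α : ℕ) (hα : α = X'.card) (hα1 : 1 ≤ α)
    (β : ℕ) (hβ : β = (α + 1) / 2)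
    (g : ℤ) (hg : g = ∑ v ∈ X \ X', sv A v)
    (b : ℤ) (hb : b = ∑ v ∈ X, (min (outdeg A v) (indeg A v) : ℤ))
    (Δ1 : ℤ) (hΔub : ∀ v ∈ X', sv A v ≤ Δ1) (hΔmem : ∃ v ∈ X', sv A v = Δ1)
    (hg0 : 0 ≤ g) (hgΔ : g ≤ Δ1 - θ)
    (hθeq : θ = (∑ v ∈ X.filter (fun v => Forward A X1 X2 v), sv A v)
      - ∑ v ∈ X.filter (fun v => ¬ Forward A X1 X2 v), sv A v) :
    min (arcs A X Y : ℤ) (arcs A Y X : ℤ) ≤ 2 * (β : ℤ) * Δ1 - ((β : ℤ) + 1) * θ + b := by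
  have hXY : X ∪ Y = univ := by rw [hY]; exact Finset.union_compl X
  have hdXY : Disjoint X Y := by rw [hY]; exact disjoint_compl_right
  -- arcs as degree sums
  have hsplitO : ∑ v ∈ X, outdeg A v = arcs A X X + arcs A X Y := by
    rw [arcs_sum_fst, arcs_sum_fst, ← Finset.sum_add_distrib]
    refine Finset.sum_congr rfl fun v _ => ?_
    rw [outdeg, ← hXY, Finset.filter_union,
      Finset.card_union_of_disjoint (Finset.disjoint_filter_filter hdXY)]
  have hsplitI : ∑ v ∈ X, indeg A v = arcs A X X + arcs A Y X := by
    rw [arcs_sum_snd, arcs_sum_snd, ← Finset.sum_add_distrib]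
    refine Finset.sum_congr rfl fun v _ => ?_
    rw [indeg, ← hXY, Finset.filter_union,
      Finset.card_union_of_disjoint (Finset.disjoint_filter_filter hdXY)]
  rw [hEX, zero_add] at hsplitO hsplitI
  have hO : (arcs A X Y : ℤ) = ∑ v ∈ X, (outdeg A v : ℤ) := by
    rw [← hsplitO]; push_cast; ring
  have hI : (arcs A Y X : ℤ) = ∑ v ∈ X, (indeg A v : ℤ) := by
    rw [← hsplitI]; push_cast; ring
  -- positive and negative surplus parts
  set p : V → ℤ := fun v => max ((outdeg A v : ℤ) - indeg A v) 0 with hp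
  set m : V → ℤ := fun v => max ((indeg A v : ℤ) - outdeg A v) 0 with hm
  have hOb : (arcs A X Y : ℤ) = b + ∑ v ∈ X, p v := by
    rw [hO, hb, ← Finset.sum_add_distrib]
    refine Finset.sum_congr rfl fun v _ => ?_
    simp only [hp]
    push_cast
    exact int_min_max _ _
  have hIb : (arcs A Y X : ℤ) = b + ∑ v ∈ X, m v := by
    rw [hI, hb, ← Finset.sum_add_distrib]
    refine Finset.sum_congr rfl fun v _ => ?_
    simp only [hm]
    push_cast
    rw [min_comm]
    exact int_min_max _ _
  have hsvpm : ∀ v, sv A v = p v + m v := fun v => by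
    simp only [sv, hp, hm]; exact int_abs_max _ _
  set P := ∑ v ∈ X, p v with hP
  set M := ∑ v ∈ X, m v with hM
  have hS : ∑ v ∈ X, sv A v = P + M := by
    rw [hP, hM, ← Finset.sum_add_distrib]
    exact Finset.sum_congr rfl fun v _ => hsvpm v
  -- minimality against the partition (X, ∅): θ ≤ |P - M|
  have hgap0 : gap A Y X ∅ = (arcs A X Y : ℤ) - arcs A Y X := by
    simp [gap, arcs]
  have hmin' := hmin X ∅ (by simp) (Finset.disjoint_empty_right _)
  rw [← hθ, hgap0, abs_of_pos hθpos, hOb, hIb] at hmin'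
  have hPMabs : θ ≤ |P - M| := by
    have : b + P - (b + M) = P - M := by ring
    rwa [this] at hmin'
  -- forward/backward sums
  have hFB : ∑ v ∈ X.filter (fun v => Forward A X1 X2 v), sv A v
      + ∑ v ∈ X.filter (fun v => ¬ Forward A X1 X2 v), sv A v = ∑ v ∈ X, sv A v :=
    Finset.sum_filter_add_sum_filter_not X _ _
  -- min(P,M) ≤ B
  have hminB : min P M ≤ ∑ v ∈ X.filter (fun v => ¬ Forward A X1 X2 v), sv A v := by
    rcases le_total P M with h | h
    · have habs : θ ≤ M - P := by
        rw [abs_of_nonpos (by linarith)] at hPMabs; linarith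
      rw [min_eq_left h]
      linarith [hS, hFB, hθeq]
    · have habs : θ ≤ P - M := by
        rw [abs_of_nonneg (by linarith)] at hPMabs; linarith
      rw [min_eq_right h]
      linarith [hS, hFB, hθeq]
  -- splitting sums over X' and X \ X'
  have hX'sub : X' ⊆ X := by rw [hX']; exact Finset.filter_subset _ _
  have hsplitsum : ∀ (q : V → Prop) (_ : DecidablePred q),
      ∑ v ∈ X.filter q, sv A v = ∑ v ∈ X'.filter q, sv A v
        + ∑ v ∈ (X \ X').filter q, sv A v := by
    intro q _
    simp only [Finset.sum_filter]
    rw [← Finset.sum_sdiff hX'sub]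
    ring
  have hFsplit := hsplitsum (fun v => Forward A X1 X2 v) inferInstance
  have hBsplit := hsplitsum (fun v => ¬ Forward A X1 X2 v) inferInstance
  -- cardinalities
  set k1 := (X'.filter (fun v => Forward A X1 X2 v)).card with hk1
  set k2 := (X'.filter (fun v => ¬ Forward A X1 X2 v)).card with hk2
  have hk : k1 + k2 = α := by
    rw [hα, hk1, hk2]; exact Finset.card_filter_add_card_filter_not _
  -- bounds via Δ1
  have hΔ0 : θ ≤ Δ1 := by
    obtain ⟨v0, hv0, hv0e⟩ := hΔmem
    rw [hX'] at hv0
    exact hv0e ▸ (Finset.mem_filter.mp hv0).2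
  have hΔnn : 0 ≤ Δ1 := le_trans hθpos.le hΔ0
  have hF1 : ∑ v ∈ X'.filter (fun v => Forward A X1 X2 v), sv A v ≤ (k1 : ℤ) * Δ1 := by
    have := Finset.sum_le_card_nsmul (X'.filter (fun v => Forward A X1 X2 v)) (sv A) Δ1
      (fun v hv => hΔub v (Finset.mem_filter.mp hv).1)
    simpa [nsmul_eq_mul, hk1] using this
  have hB1 : ∑ v ∈ X'.filter (fun v => ¬ Forward A X1 X2 v), sv A v ≤ (k2 : ℤ) * Δ1 := by
    have := Finset.sum_le_card_nsmul (X'.filter (fun v => ¬ Forward A X1 X2 v)) (sv A) Δ1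
      (fun v hv => hΔub v (Finset.mem_filter.mp hv).1)
    simpa [nsmul_eq_mul, hk2] using this
  -- g pieces
  have hsv0 : ∀ v, 0 ≤ sv A v := fun v => abs_nonneg _
  have hgsplit : g = ∑ v ∈ (X \ X').filter (fun v => Forward A X1 X2 v), sv A v
      + ∑ v ∈ (X \ X').filter (fun v => ¬ Forward A X1 X2 v), sv A v := by
    rw [hg, ← Finset.sum_filter_add_sum_filter_not (X \ X') (fun v => Forward A X1 X2 v)]
  have hgf0 : 0 ≤ ∑ v ∈ (X \ X').filter (fun v => Forward A X1 X2 v), sv A v :=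
    Finset.sum_nonneg fun v _ => hsv0 v
  have hgb0 : 0 ≤ ∑ v ∈ (X \ X').filter (fun v => ¬ Forward A X1 X2 v), sv A v :=
    Finset.sum_nonneg fun v _ => hsv0 v
  -- β facts
  have hβ1 : 1 ≤ β := by omega
  have hβ2 : α ≤ 2 * β := by omega
  -- bound B
  have hBfinal : ∑ v ∈ X.filter (fun v => ¬ Forward A X1 X2 v), sv A v
      ≤ 2 * (β : ℤ) * Δ1 - ((β : ℤ) + 1) * θ := by
    rcases le_or_gt k1 β with hcase | hcase
    · -- B = F - θ ≤ k1 Δ1 + g_f - θ, g_f ≤ g ≤ Δ1 - θ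
      have hk1β : (k1 : ℤ) ≤ β := by exact_mod_cast hcase
      have h1 : 0 ≤ ((β : ℤ) - k1) * Δ1 := mul_nonneg (by linarith) hΔnn
      have h2 : 0 ≤ ((β : ℤ) - 1) * (Δ1 - θ) := by
        have : (1 : ℤ) ≤ β := by exact_mod_cast hβ1
        exact mul_nonneg (by linarith) (by linarith)
      linarith [hFsplit, hBsplit, hgsplit, hF1, hgb0, hθeq, hgΔ]
    · -- B ≤ k2 Δ1 + g_b, k2 ≤ β - 1
      have hk2β : (k2 : ℤ) ≤ (β : ℤ) - 1 := by
        have : k2 + (β + 1) ≤ α := by omega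
        have : k2 ≤ β - 1 := by omega
        omega
      have h1 : 0 ≤ ((β : ℤ) - 1 - k2) * Δ1 := mul_nonneg (by linarith) hΔnn
      have h2 : 0 ≤ (β : ℤ) * (Δ1 - θ) := mul_nonneg (by positivity) (by linarith)
      linarith [hBsplit, hgsplit, hB1, hgf0, hgΔ]
  -- assemble
  rw [hOb, hIb, min_add_add_left]
  linarith [hminB, hBfinal]
end
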